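/- arXiv:2410.06348 — 6 statements merged into one kernel-verified Lean document; each statement's English description precedes it below -/
import Mathlib

section
/- Let μ, y, n ∈ ℝ and σ > 0, and let f(·) = gaussianPDFReal μ σ² (·) denote the Gaussian probability density with mean μ and variance σ², i.e., f(x) = (1/√(2πσ²)) exp(−(x−μ)²/(2σ²)). Then f(y + n) ≥ f(y) if and only if n² ≤ 2n(μ − y). -/
open ProbabilityTheory

/-- NEM Condition for Gaussian Mixture Models: for the Gaussian density `f` with
mean `μ` and variance `σ²`, `f (y + n) ≥ f y` iff `n² ≤ 2n(μ − y)`. -/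
theorem nem_gmm_condition (μ y n σ : ℝ) (hσ : 0 < σ) :
    gaussianPDFReal μ (⟨σ ^ 2, sq_nonneg σ⟩ : NNReal) (y + n) ≥
      gaussianPDFReal μ (⟨σ ^ 2, sq_nonneg σ⟩ : NNReal) y ↔
      n ^ 2 ≤ 2 * n * (μ - y) := by
  have hσ2 : (0:ℝ) < σ ^ 2 := by positivity
  have hc : (0:ℝ) < (√(2 * Real.pi * σ ^ 2))⁻¹ := by positivity
  show (√(2 * Real.pi * σ ^ 2))⁻¹ * Real.exp (-(y + n - μ) ^ 2 / (2 * σ ^ 2)) ≥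
      (√(2 * Real.pi * σ ^ 2))⁻¹ * Real.exp (-(y - μ) ^ 2 / (2 * σ ^ 2)) ↔
      n ^ 2 ≤ 2 * n * (μ - y)
  push_cast
  rw [ge_iff_le, mul_le_mul_iff_right₀ hc, Real.exp_le_exp]
  rw [div_le_div_iff_of_pos_right (by positivity)]
  constructor <;> intro h <;> nlinarith
end

section
/- Let K ∈ ℕ, let a be a fixed point of the Euclidean space ℝ^K, and define the Gaussian output likelihood f(t) = (2π)^(−K/2) · exp(−‖t − a‖²/2) for t ∈ ℝ^K (‖·‖ the Euclidean norm). Then for all t, n ∈ ℝ^K: f(t + n) ≥ f(t) if and only if ‖n − a + t‖² − ‖a − t‖² ≤ 0, i.e., if and only if n lies in the closed ball of radius ‖a − t‖ centered at a − t. -/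
/-- Sphere Noise Benefit Condition for Gaussian output neurons:
for `f t = (2π)^(−K/2) exp(−‖t − a‖²/2)`, `f (t + n) ≥ f t` iff
`‖n − a + t‖² − ‖a − t‖² ≤ 0`, iff `n` lies in the closed ball of radius
`‖a − t‖` centered at `a − t`. -/
theorem sphere_noise_benefit (K : ℕ) (a : EuclideanSpace ℝ (Fin K))
    (f : EuclideanSpace ℝ (Fin K) → ℝ)
    (hf : ∀ t, f t = (2 * Real.pi) ^ (-(K : ℝ) / 2) * Real.exp (-‖t - a‖ ^ 2 / 2))
    (t n : EuclideanSpace ℝ (Fin K)) :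
    (f (t + n) ≥ f t ↔ ‖n - a + t‖ ^ 2 - ‖a - t‖ ^ 2 ≤ 0) ∧
      (f (t + n) ≥ f t ↔ n ∈ Metric.closedBall (a - t) ‖a - t‖) := by
  have hC : (0:ℝ) < (2 * Real.pi) ^ (-(K : ℝ) / 2) :=
    Real.rpow_pos_of_pos (by positivity) _
  have heq : t + n - a = n - a + t := by abel
  have key : f (t + n) ≥ f t ↔ ‖n - a + t‖ ^ 2 - ‖a - t‖ ^ 2 ≤ 0 := by
    rw [hf, hf, heq, ge_iff_le, mul_le_mul_iff_right₀ hC, Real.exp_le_exp,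
      div_le_div_iff_of_pos_right (by norm_num), neg_le_neg_iff,
      ← norm_neg (t - a)]
    have : -(t - a) = a - t := by abel
    rw [this]
    constructor
    · intro h
      nlinarith [norm_nonneg (n - a + t), norm_nonneg (a - t)]
    · intro h; nlinarith
  refine ⟨key, key.trans ?_⟩
  rw [Metric.mem_closedBall, dist_eq_norm]
  have h2 : n - (a - t) = n - a + t := by abel
  rw [h2]
  constructor
  · intro h
    nlinarith [norm_nonneg (n - a + t), norm_nonneg (a - t)]
  · intro h; nlinarith [norm_nonneg (n - a + t), norm_nonneg (a - t)]
end

section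
/- Fix ε > 0, Δ > 0, k ∈ ℕ, and set b = Δ/ε. For a : Fin k → ℝ let μ_a denote the product measure on Fin k → ℝ whose i-th factor is the measure on ℝ with density x ↦ (1/(2b)) · exp(−|x − a_i| / b) with respect to Lebesgue measure (the Laplace distribution Lap(b) centered at a_i). Then for all a, a' : Fin k → ℝ with ∑_i |a_i − a'_i| ≤ Δ and every measurable set S ⊆ (Fin k → ℝ): μ_a(S) ≤ exp(ε) · μ_{a'}(S). -/
open MeasureTheory Set
open scoped NNReal ENNReal

lemma pi_mono_aux {ι : Type*} [Fintype ι] {α : ι → Type*} [∀ i, MeasurableSpace (α i)]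
    {μ ν : ∀ i, Measure (α i)} (h : ∀ i, μ i ≤ ν i) : Measure.pi μ ≤ Measure.pi ν := by
  refine Measure.le_iff.mpr fun s hs => ?_
  rw [Measure.pi, Measure.pi, toMeasure_apply _ _ hs, toMeasure_apply _ _ hs]
  have : OuterMeasure.pi (fun i => (μ i).toOuterMeasure)
      ≤ OuterMeasure.pi (fun i => (ν i).toOuterMeasure) := by
    refine OuterMeasure.le_boundedBy.mpr fun t => (OuterMeasure.boundedBy_le t).trans ?_
    exact Finset.prod_le_prod' fun i _ => h i _
  exact this s

lemma pi_smul_aux {ι : Type*} [Fintype ι] {α : ι → Type*} [∀ i, MeasurableSpace (α i)]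
    (c : ι → ℝ≥0) (ν : ∀ i, Measure (α i)) [∀ i, SigmaFinite (ν i)] :
    Measure.pi (fun i => c i • ν i) = (∏ i, (c i : ENNReal)) • Measure.pi ν := by
  refine Measure.pi_eq fun s hs => ?_
  simp only [Measure.smul_apply, Measure.pi_pi, smul_eq_mul, ENNReal.smul_def]
  rw [← Finset.prod_mul_distrib]

/-- The Laplace mechanism output distribution with center `a`: the product measure
whose `i`-th factor has density `x ↦ (1/(2b)) exp(−|x − a_i|/b)` w.r.t. Lebesgue. -/
noncomputable def laplaceMechanism (k : ℕ) (b : ℝ) (a : Fin k → ℝ) :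
    Measure (Fin k → ℝ) :=
  Measure.pi fun i =>
    volume.withDensity fun x =>
      ENNReal.ofReal ((1 / (2 * b)) * Real.exp (-|x - a i| / b))

/-- ε-Differential Privacy Theorem for the Laplace mechanism: with noise scale
`b = Δ/ε`, for any two centers at ℓ₁-distance at most `Δ` and any measurable set `S`,
`μ_a(S) ≤ e^ε · μ_{a'}(S)`. -/
theorem laplace_mechanism_differential_privacy (ε Δ : ℝ) (hε : 0 < ε) (hΔ : 0 < Δ)
    (k : ℕ) (b : ℝ) (hb : b = Δ / ε) (a a' : Fin k → ℝ)
    (hdist : ∑ i, |a i - a' i| ≤ Δ) (S : Set (Fin k → ℝ)) (hS : MeasurableSet S) :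
    laplaceMechanism k b a S ≤ ENNReal.ofReal (Real.exp ε) * laplaceMechanism k b a' S := by
  have hbpos : 0 < b := hb ▸ div_pos hΔ hε
  set c : Fin k → ℝ≥0 := fun i => (Real.exp (|a i - a' i| / b)).toNNReal with hc
  set ν : Fin k → Measure ℝ := fun i =>
    volume.withDensity fun x =>
      ENNReal.ofReal ((1 / (2 * b)) * Real.exp (-|x - a' i| / b)) with hν
  -- coordinatewise inequality
  have key : ∀ i, (volume.withDensity fun x =>
      ENNReal.ofReal ((1 / (2 * b)) * Real.exp (-|x - a i| / b))) ≤ c i • ν i := by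
    intro i
    have hmeas : Measurable fun x : ℝ =>
        ENNReal.ofReal ((1 / (2 * b)) * Real.exp (-|x - a' i| / b)) := by
      fun_prop
    have : (c i • ν i) = volume.withDensity fun x =>
        (c i : ENNReal) * ENNReal.ofReal ((1 / (2 * b)) * Real.exp (-|x - a' i| / b)) := by
      rw [hν, ENNReal.smul_def, ← withDensity_smul _ hmeas]; rfl
    rw [this]
    refine withDensity_mono (Filter.Eventually.of_forall fun x => ?_)
    dsimp only
    have hcoe : (c i : ENNReal) = ENNReal.ofReal (Real.exp (|a i - a' i| / b)) := by
      simp [hc, ENNReal.ofReal]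
    rw [hcoe, ← ENNReal.ofReal_mul (Real.exp_nonneg _)]
    refine ENNReal.ofReal_le_ofReal ?_
    rw [mul_comm (Real.exp _), mul_assoc]
    refine mul_le_mul_of_nonneg_left ?_ (by positivity)
    rw [← Real.exp_add, ← add_div]
    refine Real.exp_le_exp.mpr ?_
    have hgc : -|x - a i| ≤ -|x - a' i| + |a i - a' i| → -|x - a i| / b ≤ (-|x - a' i| + |a i - a' i|) / b := fun h => by gcongr
    refine hgc ?_
    have h2 : |x - a' i| ≤ |x - a i| + |a i - a' i| := abs_sub_le x (a i) (a' i)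
    linarith
  calc laplaceMechanism k b a S
      ≤ Measure.pi (fun i => c i • ν i) S := pi_mono_aux key S
    _ = (∏ i, (c i : ENNReal)) * laplaceMechanism k b a' S := by
        rw [pi_smul_aux]; rfl
    _ ≤ ENNReal.ofReal (Real.exp ε) * laplaceMechanism k b a' S := by
        refine mul_le_mul_left ?_ _
        have : ∏ i, ((c i : ENNReal)) =
            ENNReal.ofReal (∏ i, Real.exp (|a i - a' i| / b)) := by
          rw [ENNReal.ofReal_prod_of_nonneg fun i _ => Real.exp_nonneg _]
          refine Finset.prod_congr rfl fun i _ => ?_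
          simp [hc, ENNReal.ofReal]
        rw [this]
        refine ENNReal.ofReal_le_ofReal ?_
        rw [← Real.exp_sum]
        refine Real.exp_le_exp.mpr ?_
        rw [← Finset.sum_div]
        rw [hb, div_div_eq_mul_div, div_le_iff₀ hΔ]
        nlinarith [mul_le_mul_of_nonneg_right hdist hε.le]
end

section
/- Let ε > 0 and Δ > 0, and let g : ℝ → ℝ be a nonnegative measurable probability density (∫ g = 1 with respect to Lebesgue measure) such that for all x ∈ ℝ and all t ∈ ℝ with |t| ≤ Δ: g(x) ≤ exp(ε) · g(x + t). For a ∈ ℝ let ν_a be the measure on ℝ with density z ↦ g(z − a) with respect to Lebesgue measure (the distribution of a + noise with density g). Then for all a, a' ∈ ℝ with |a − a'| ≤ Δ and every measurable set S ⊆ ℝ: ν_a(S) ≤ exp(ε) · ν_{a'}(S); i.e., the additive noise mechanism is ε-differentially private for all real-valued queries of sensitivity at most Δ. -/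
open MeasureTheory

/-- Sufficient condition (He et al.) for ε-differential privacy of a real-valued
additive noise mechanism: if the noise density `g` satisfies
`g(x) ≤ e^ε · g(x + t)` for all `|t| ≤ Δ`, then the output distributions
`ν_a` (density `z ↦ g(z − a)`) satisfy `ν_a(S) ≤ e^ε ν_{a'}(S)` whenever
`|a − a'| ≤ Δ`. -/
theorem additive_noise_differential_privacy (ε Δ : ℝ) (hε : 0 < ε) (hΔ : 0 < Δ)
    (g : ℝ → ℝ) (hg_meas : Measurable g) (hg_nonneg : ∀ x, 0 ≤ g x)
    (hg_int : ∫ x, g x = 1)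
    (hg_ratio : ∀ x t : ℝ, |t| ≤ Δ → g x ≤ Real.exp ε * g (x + t))
    (ν : ℝ → Measure ℝ)
    (hν : ∀ a, ν a = volume.withDensity fun z => ENNReal.ofReal (g (z - a)))
    (a a' : ℝ) (hdist : |a - a'| ≤ Δ) (S : Set ℝ) (hS : MeasurableSet S) :
    ν a S ≤ ENNReal.ofReal (Real.exp ε) * ν a' S := by
  rw [hν, hν, withDensity_apply _ hS, withDensity_apply _ hS,
    ← lintegral_const_mul _ (by measurability)]
  apply lintegral_mono
  intro z
  calc ENNReal.ofReal (g (z - a))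
      ≤ ENNReal.ofReal (Real.exp ε * g (z - a + (a - a'))) :=
        ENNReal.ofReal_le_ofReal (hg_ratio _ _ hdist)
    _ = ENNReal.ofReal (Real.exp ε) * ENNReal.ofReal (g (z - a')) := by
        rw [ENNReal.ofReal_mul (Real.exp_pos ε).le]
        ring_nf
end

section
/- Let 𝒩 be a nonempty compact metric space (the set of admissible noise values), let F₁, F₀ : 𝒩 → ℝ be continuous functions with values in [0, 1] (giving the detection probability and false-alarm probability of the detector when the constant noise value n is added to the observation), and let α ∈ [0, 1]. Suppose there exists a Borel probability measure μ on 𝒩 with ∫ F₀ dμ ≤ α. Then there exist points n₁, n₂ ∈ 𝒩 and λ ∈ [0, 1] such that the two-point mixture μ* = λ·δ_{n₁} + (1 − λ)·δ_{n₂} satisfies ∫ F₀ dμ* ≤ α, and for every Borel probability measure ν on 𝒩 with ∫ F₀ dν ≤ α one has ∫ F₁ dμ* ≥ ∫ F₁ dν. -/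
open MeasureTheory

private lemma tri_max (a b u v : ℝ) (hu : 0 ≤ u) (hv : 0 ≤ v) :
    u*a + v*b ≤ max ((u+v)*a) ((u+v)*b) := by
  rcases le_total a b with h | h
  · exact le_max_of_le_right (by nlinarith)
  · exact le_max_of_le_left (by nlinarith)

private lemma tri_min (a b u v : ℝ) (hu : 0 ≤ u) (hv : 0 ≤ v) :
    min ((u+v)*a) ((u+v)*b) ≤ u*a + v*b := by
  rcases le_total a b with h | h
  · exact min_le_of_left_le (by nlinarith)
  · exact min_le_of_right_le (by nlinarith)

set_option maxHeartbeats 1600000 in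
/-- Sorted triangle domination lemma (scalar form). -/
private lemma triangle_sorted (x₁ y₁ x₂ y₂ x₃ y₃ w₁ w₂ w₃ : ℝ)
    (h₁ : 0 ≤ w₁) (h₂ : 0 ≤ w₂) (h₃ : 0 ≤ w₃) (hs : w₁ + w₂ + w₃ = 1)
    (h12 : x₁ ≤ x₂) (h23 : x₂ ≤ x₃) :
    ∃ a₁ a₂ b₁ b₂ t : ℝ,
      ((a₁ = x₁ ∧ a₂ = y₁) ∨ (a₁ = x₂ ∧ a₂ = y₂) ∨ (a₁ = x₃ ∧ a₂ = y₃)) ∧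
      ((b₁ = x₁ ∧ b₂ = y₁) ∨ (b₁ = x₂ ∧ b₂ = y₂) ∨ (b₁ = x₃ ∧ b₂ = y₃)) ∧
      0 ≤ t ∧ t ≤ 1 ∧
      t * a₁ + (1 - t) * b₁ ≤ w₁ * x₁ + w₂ * x₂ + w₃ * x₃ ∧
      w₁ * y₁ + w₂ * y₂ + w₃ * y₃ ≤ t * a₂ + (1 - t) * b₂ := by
  have hx1 : (w₁ * x₁ + w₂ * x₂ + w₃ * x₃) - x₁ = w₂ * (x₂ - x₁) + w₃ * (x₃ - x₁) := by
    linear_combination x₁ * hs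
  have hx3 : x₃ - (w₁ * x₁ + w₂ * x₂ + w₃ * x₃) = w₁ * (x₃ - x₁) + w₂ * (x₃ - x₂) := by
    linear_combination -x₃ * hs
  have m2 : 0 ≤ w₂ * (x₂ - x₁) := mul_nonneg h₂ (by linarith)
  have m3 : 0 ≤ w₃ * (x₃ - x₁) := mul_nonneg h₃ (by linarith)
  have m1' : 0 ≤ w₁ * (x₃ - x₁) := mul_nonneg h₁ (by linarith)
  have m2' : 0 ≤ w₂ * (x₃ - x₂) := mul_nonneg h₂ (by linarith)
  have hpx1 : x₁ ≤ w₁ * x₁ + w₂ * x₂ + w₃ * x₃ := by linarith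
  have hpx3 : w₁ * x₁ + w₂ * x₂ + w₃ * x₃ ≤ x₃ := by linarith
  obtain ⟨px, hpxd⟩ : ∃ p, w₁ * x₁ + w₂ * x₂ + w₃ * x₃ = p := ⟨_, rfl⟩
  rw [hpxd] at hx1 hx3 hpx1 hpx3 ⊢
  rcases le_or_gt px x₂ with hc | hc
  · rcases eq_or_lt_of_le h12 with heq | hlt
    · -- x₁ = x₂, hence px = x₁
      subst heq
      have hpe : w₁ * x₁ + w₂ * x₁ + w₃ * x₃ = x₁ := by linarith
      have h30 : w₃ * (x₃ - x₁) = 0 := by linarith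
      rcases mul_eq_zero.mp h30 with hw3 | hx3'
      · subst hw3
        have hy2 : w₁ * y₂ + w₂ * y₂ = y₂ := by linear_combination y₂ * hs
        have hy1 : w₁ * y₁ + w₂ * y₁ = y₁ := by linear_combination y₁ * hs
        rcases le_total y₁ y₂ with hy | hy
        · refine ⟨x₁, y₂, x₁, y₂, 1, Or.inr (Or.inl ⟨rfl, rfl⟩), Or.inr (Or.inl ⟨rfl, rfl⟩),
            by norm_num, by norm_num, by linarith, ?_⟩
          have : 0 ≤ w₁ * (y₂ - y₁) := mul_nonneg h₁ (by linarith)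
          nlinarith
        · refine ⟨x₁, y₁, x₁, y₁, 1, Or.inl ⟨rfl, rfl⟩, Or.inl ⟨rfl, rfl⟩,
            by norm_num, by norm_num, by linarith, ?_⟩
          have : 0 ≤ w₂ * (y₁ - y₂) := mul_nonneg h₂ (by linarith)
          nlinarith
      · -- x₃ = x₁
        have hx31 : x₃ = x₁ := by linarith
        subst hx31
        have hys : w₁ * y₃ + w₂ * y₃ + w₃ * y₃ = y₃ := by linear_combination y₃ * hs
        have hy2s : w₁ * y₂ + w₂ * y₂ + w₃ * y₂ = y₂ := by linear_combination y₂ * hs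
        have hy1s : w₁ * y₁ + w₂ * y₁ + w₃ * y₁ = y₁ := by linear_combination y₁ * hs
        rcases le_total y₁ y₂ with hy | hy
        · rcases le_total y₂ y₃ with hy' | hy'
          · refine ⟨x₃, y₃, x₃, y₃, 1, Or.inr (Or.inr ⟨rfl, rfl⟩), Or.inr (Or.inr ⟨rfl, rfl⟩),
              by norm_num, by norm_num, by linarith, ?_⟩
            have u1 : 0 ≤ w₁ * (y₃ - y₁) := mul_nonneg h₁ (by linarith)
            have u2 : 0 ≤ w₂ * (y₃ - y₂) := mul_nonneg h₂ (by linarith)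
            nlinarith
          · refine ⟨x₃, y₂, x₃, y₂, 1, Or.inr (Or.inl ⟨rfl, rfl⟩), Or.inr (Or.inl ⟨rfl, rfl⟩),
              by norm_num, by norm_num, by linarith, ?_⟩
            have u1 : 0 ≤ w₁ * (y₂ - y₁) := mul_nonneg h₁ (by linarith)
            have u2 : 0 ≤ w₃ * (y₂ - y₃) := mul_nonneg h₃ (by linarith)
            nlinarith
        · rcases le_total y₁ y₃ with hy' | hy'
          · refine ⟨x₃, y₃, x₃, y₃, 1, Or.inr (Or.inr ⟨rfl, rfl⟩), Or.inr (Or.inr ⟨rfl, rfl⟩),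
              by norm_num, by norm_num, by linarith, ?_⟩
            have u1 : 0 ≤ w₁ * (y₃ - y₁) := mul_nonneg h₁ (by linarith)
            have u2 : 0 ≤ w₂ * (y₃ - y₂) := mul_nonneg h₂ (by linarith)
            nlinarith
          · refine ⟨x₃, y₁, x₃, y₁, 1, Or.inl ⟨rfl, rfl⟩, Or.inl ⟨rfl, rfl⟩,
              by norm_num, by norm_num, by linarith, ?_⟩
            have u1 : 0 ≤ w₂ * (y₁ - y₂) := mul_nonneg h₂ (by linarith)
            have u2 : 0 ≤ w₃ * (y₁ - y₃) := mul_nonneg h₃ (by linarith)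
            nlinarith
    · -- x₁ < x₂ ≤ x₃ and px ≤ x₂
      have hd₂ : (0:ℝ) < x₂ - x₁ := by linarith
      have hd₃ : (0:ℝ) < x₃ - x₁ := by linarith
      have hu0 : 0 ≤ px - x₁ := by linarith
      have huk : px - x₁ = w₂ * (x₂ - x₁) + w₃ * (x₃ - x₁) := hx1
      have key : (w₁ * y₁ + w₂ * y₂ + w₃ * y₃) - y₁
          ≤ max ((px - x₁) / (x₂ - x₁) * (y₂ - y₁)) ((px - x₁) / (x₃ - x₁) * (y₃ - y₁)) := by
        have h := tri_max ((y₂ - y₁)/(x₂ - x₁)) ((y₃ - y₁)/(x₃ - x₁))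
          (w₂ * (x₂ - x₁)) (w₃ * (x₃ - x₁)) m2 m3
        have e1 : w₂ * (x₂ - x₁) * ((y₂ - y₁)/(x₂ - x₁)) = w₂ * (y₂ - y₁) := by
          field_simp
        have e2 : w₃ * (x₃ - x₁) * ((y₃ - y₁)/(x₃ - x₁)) = w₃ * (y₃ - y₁) := by
          field_simp
        have e3 : (w₂ * (x₂ - x₁) + w₃ * (x₃ - x₁)) * ((y₂ - y₁)/(x₂ - x₁))
            = (px - x₁) / (x₂ - x₁) * (y₂ - y₁) := by rw [← huk]; ring
        have e4 : (w₂ * (x₂ - x₁) + w₃ * (x₃ - x₁)) * ((y₃ - y₁)/(x₃ - x₁))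
            = (px - x₁) / (x₃ - x₁) * (y₃ - y₁) := by rw [← huk]; ring
        rw [e1, e2, e3, e4] at h
        have ey : (w₁ * y₁ + w₂ * y₂ + w₃ * y₃) - y₁ = w₂ * (y₂ - y₁) + w₃ * (y₃ - y₁) := by
          linear_combination y₁ * hs
        linarith
      rcases le_total ((px - x₁) / (x₃ - x₁) * (y₃ - y₁)) ((px - x₁) / (x₂ - x₁) * (y₂ - y₁)) with hm | hm
      · rw [max_eq_left hm] at key
        refine ⟨x₁, y₁, x₂, y₂, (x₂ - px) / (x₂ - x₁), Or.inl ⟨rfl, rfl⟩,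
          Or.inr (Or.inl ⟨rfl, rfl⟩), div_nonneg (by linarith) (by linarith), ?_, ?_, ?_⟩
        · rw [div_le_one hd₂]; linarith
        · have : (x₂ - px) / (x₂ - x₁) * x₁ + (1 - (x₂ - px) / (x₂ - x₁)) * x₂ = px := by
            field_simp; ring
          rw [this]
        · have : (x₂ - px) / (x₂ - x₁) * y₁ + (1 - (x₂ - px) / (x₂ - x₁)) * y₂
              = y₁ + (px - x₁) / (x₂ - x₁) * (y₂ - y₁) := by
            field_simp; ring
          rw [this]; linarith
      · rw [max_eq_right hm] at key
        refine ⟨x₁, y₁, x₃, y₃, (x₃ - px) / (x₃ - x₁), Or.inl ⟨rfl, rfl⟩,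
          Or.inr (Or.inr ⟨rfl, rfl⟩), div_nonneg (by linarith) (by linarith), ?_, ?_, ?_⟩
        · rw [div_le_one hd₃]; linarith
        · have : (x₃ - px) / (x₃ - x₁) * x₁ + (1 - (x₃ - px) / (x₃ - x₁)) * x₃ = px := by
            field_simp; ring
          rw [this]
        · have : (x₃ - px) / (x₃ - x₁) * y₁ + (1 - (x₃ - px) / (x₃ - x₁)) * y₃
              = y₁ + (px - x₁) / (x₃ - x₁) * (y₃ - y₁) := by
            field_simp; ring
          rw [this]; linarith
  · -- x₂ < px ≤ x₃
    have he₂ : (0:ℝ) < x₃ - x₂ := by linarith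
    have he₁ : (0:ℝ) < x₃ - x₁ := by linarith
    have hv0 : 0 ≤ x₃ - px := by linarith
    have hvk : x₃ - px = w₁ * (x₃ - x₁) + w₂ * (x₃ - x₂) := hx3
    have key : min ((x₃ - px) / (x₃ - x₁) * (y₃ - y₁)) ((x₃ - px) / (x₃ - x₂) * (y₃ - y₂))
        ≤ y₃ - (w₁ * y₁ + w₂ * y₂ + w₃ * y₃) := by
      have h := tri_min ((y₃ - y₁)/(x₃ - x₁)) ((y₃ - y₂)/(x₃ - x₂))
        (w₁ * (x₃ - x₁)) (w₂ * (x₃ - x₂)) m1' m2'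
      have e1 : w₁ * (x₃ - x₁) * ((y₃ - y₁)/(x₃ - x₁)) = w₁ * (y₃ - y₁) := by field_simp
      have e2 : w₂ * (x₃ - x₂) * ((y₃ - y₂)/(x₃ - x₂)) = w₂ * (y₃ - y₂) := by field_simp
      have e3 : (w₁ * (x₃ - x₁) + w₂ * (x₃ - x₂)) * ((y₃ - y₁)/(x₃ - x₁))
          = (x₃ - px) / (x₃ - x₁) * (y₃ - y₁) := by rw [← hvk]; ring
      have e4 : (w₁ * (x₃ - x₁) + w₂ * (x₃ - x₂)) * ((y₃ - y₂)/(x₃ - x₂))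
          = (x₃ - px) / (x₃ - x₂) * (y₃ - y₂) := by rw [← hvk]; ring
      rw [e1, e2, e3, e4] at h
      have ey : y₃ - (w₁ * y₁ + w₂ * y₂ + w₃ * y₃) = w₁ * (y₃ - y₁) + w₂ * (y₃ - y₂) := by
        linear_combination -y₃ * hs
      linarith
    rcases le_total ((x₃ - px) / (x₃ - x₁) * (y₃ - y₁)) ((x₃ - px) / (x₃ - x₂) * (y₃ - y₂)) with hm | hm
    · rw [min_eq_left hm] at key
      refine ⟨x₁, y₁, x₃, y₃, (x₃ - px) / (x₃ - x₁), Or.inl ⟨rfl, rfl⟩,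
        Or.inr (Or.inr ⟨rfl, rfl⟩), div_nonneg hv0 (by linarith), ?_, ?_, ?_⟩
      · rw [div_le_one he₁]; linarith
      · have : (x₃ - px) / (x₃ - x₁) * x₁ + (1 - (x₃ - px) / (x₃ - x₁)) * x₃ = px := by
          field_simp; ring
        rw [this]
      · have : (x₃ - px) / (x₃ - x₁) * y₁ + (1 - (x₃ - px) / (x₃ - x₁)) * y₃
            = y₃ - (x₃ - px) / (x₃ - x₁) * (y₃ - y₁) := by field_simp; ring
        rw [this]; linarith
    · rw [min_eq_right hm] at key
      refine ⟨x₂, y₂, x₃, y₃, (x₃ - px) / (x₃ - x₂), Or.inr (Or.inl ⟨rfl, rfl⟩),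
        Or.inr (Or.inr ⟨rfl, rfl⟩), div_nonneg hv0 (by linarith), ?_, ?_, ?_⟩
      · rw [div_le_one he₂]; linarith
      · have : (x₃ - px) / (x₃ - x₂) * x₂ + (1 - (x₃ - px) / (x₃ - x₂)) * x₃ = px := by
          field_simp; ring
        rw [this]
      · have : (x₃ - px) / (x₃ - x₂) * y₂ + (1 - (x₃ - px) / (x₃ - x₂)) * y₃
            = y₃ - (x₃ - px) / (x₃ - x₂) * (y₃ - y₂) := by field_simp; ring
        rw [this]; linarith

/-- Sorted triangle domination lemma, pair form. -/
private lemma triangle_sorted_pair (c₁ c₂ c₃ : ℝ × ℝ) (w₁ w₂ w₃ : ℝ)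
    (h₁ : 0 ≤ w₁) (h₂ : 0 ≤ w₂) (h₃ : 0 ≤ w₃) (hs : w₁ + w₂ + w₃ = 1)
    (h12 : c₁.1 ≤ c₂.1) (h23 : c₂.1 ≤ c₃.1) :
    ∃ p q : ℝ × ℝ, (p = c₁ ∨ p = c₂ ∨ p = c₃) ∧ (q = c₁ ∨ q = c₂ ∨ q = c₃) ∧
      ∃ t : ℝ, 0 ≤ t ∧ t ≤ 1 ∧
        t * p.1 + (1 - t) * q.1 ≤ w₁ * c₁.1 + w₂ * c₂.1 + w₃ * c₃.1 ∧
        w₁ * c₁.2 + w₂ * c₂.2 + w₃ * c₃.2 ≤ t * p.2 + (1 - t) * q.2 := by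
  obtain ⟨a₁, a₂, b₁, b₂, t, hA, hB, h0, h1, hx, hy⟩ :=
    triangle_sorted c₁.1 c₁.2 c₂.1 c₂.2 c₃.1 c₃.2 w₁ w₂ w₃ h₁ h₂ h₃ hs h12 h23
  refine ⟨(a₁, a₂), (b₁, b₂), ?_, ?_, t, h0, h1, hx, hy⟩
  · rcases hA with ⟨u, v⟩ | ⟨u, v⟩ | ⟨u, v⟩
    · exact Or.inl (Prod.ext u v)
    · exact Or.inr (Or.inl (Prod.ext u v))
    · exact Or.inr (Or.inr (Prod.ext u v))
  · rcases hB with ⟨u, v⟩ | ⟨u, v⟩ | ⟨u, v⟩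
    · exact Or.inl (Prod.ext u v)
    · exact Or.inr (Or.inl (Prod.ext u v))
    · exact Or.inr (Or.inr (Prod.ext u v))

/-- Triangle domination lemma: a convex combination of three points of the plane is
dominated (north-west order) by a convex combination of two of them. -/
private lemma triangle_dom (c₁ c₂ c₃ : ℝ × ℝ) (w₁ w₂ w₃ : ℝ)
    (h₁ : 0 ≤ w₁) (h₂ : 0 ≤ w₂) (h₃ : 0 ≤ w₃) (hs : w₁ + w₂ + w₃ = 1) :
    ∃ p q : ℝ × ℝ, (p = c₁ ∨ p = c₂ ∨ p = c₃) ∧ (q = c₁ ∨ q = c₂ ∨ q = c₃) ∧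
      ∃ t : ℝ, 0 ≤ t ∧ t ≤ 1 ∧
        t * p.1 + (1 - t) * q.1 ≤ w₁ * c₁.1 + w₂ * c₂.1 + w₃ * c₃.1 ∧
        w₁ * c₁.2 + w₂ * c₂.2 + w₃ * c₃.2 ≤ t * p.2 + (1 - t) * q.2 := by
  rcases le_total c₁.1 c₂.1 with h12 | h21 <;> rcases le_total c₂.1 c₃.1 with h23 | h32 <;>
    rcases le_total c₁.1 c₃.1 with h13 | h31
  · obtain ⟨p, q, hp, hq, t, h0, h1, hx, hy⟩ :=
      triangle_sorted_pair c₁ c₂ c₃ w₁ w₂ w₃ h₁ h₂ h₃ hs h12 h23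
    exact ⟨p, q, by tauto, by tauto, t, h0, h1, by linarith, by linarith⟩
  · obtain ⟨p, q, hp, hq, t, h0, h1, hx, hy⟩ :=
      triangle_sorted_pair c₁ c₂ c₃ w₁ w₂ w₃ h₁ h₂ h₃ hs h12 h23
    exact ⟨p, q, by tauto, by tauto, t, h0, h1, by linarith, by linarith⟩
  · obtain ⟨p, q, hp, hq, t, h0, h1, hx, hy⟩ :=
      triangle_sorted_pair c₁ c₃ c₂ w₁ w₃ w₂ h₁ h₃ h₂ (by linarith) h13 h32
    exact ⟨p, q, by tauto, by tauto, t, h0, h1, by linarith, by linarith⟩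
  · obtain ⟨p, q, hp, hq, t, h0, h1, hx, hy⟩ :=
      triangle_sorted_pair c₃ c₁ c₂ w₃ w₁ w₂ h₃ h₁ h₂ (by linarith) h31 h12
    exact ⟨p, q, by tauto, by tauto, t, h0, h1, by linarith, by linarith⟩
  · obtain ⟨p, q, hp, hq, t, h0, h1, hx, hy⟩ :=
      triangle_sorted_pair c₂ c₁ c₃ w₂ w₁ w₃ h₂ h₁ h₃ (by linarith) h21 h13
    exact ⟨p, q, by tauto, by tauto, t, h0, h1, by linarith, by linarith⟩
  · obtain ⟨p, q, hp, hq, t, h0, h1, hx, hy⟩ :=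
      triangle_sorted_pair c₂ c₃ c₁ w₂ w₃ w₁ h₂ h₃ h₁ (by linarith) h23 h31
    exact ⟨p, q, by tauto, by tauto, t, h0, h1, by linarith, by linarith⟩
  · obtain ⟨p, q, hp, hq, t, h0, h1, hx, hy⟩ :=
      triangle_sorted_pair c₃ c₂ c₁ w₃ w₂ w₁ h₃ h₂ h₁ (by linarith) h32 h21
    exact ⟨p, q, by tauto, by tauto, t, h0, h1, by linarith, by linarith⟩
  · obtain ⟨p, q, hp, hq, t, h0, h1, hx, hy⟩ :=
      triangle_sorted_pair c₃ c₂ c₁ w₃ w₂ w₁ h₃ h₂ h₁ (by linarith) h32 h21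
    exact ⟨p, q, by tauto, by tauto, t, h0, h1, by linarith, by linarith⟩

set_option maxHeartbeats 1600000 in
/-- Four-point version of the domination lemma. -/
private lemma quad_dom (c₁ c₂ c₃ c₄ : ℝ × ℝ) (w₁ w₂ w₃ w₄ : ℝ)
    (h₁ : 0 ≤ w₁) (h₂ : 0 ≤ w₂) (h₃ : 0 ≤ w₃) (h₄ : 0 ≤ w₄)
    (hs : w₁ + w₂ + w₃ + w₄ = 1) :
    ∃ p q : ℝ × ℝ, (p = c₁ ∨ p = c₂ ∨ p = c₃ ∨ p = c₄) ∧
      (q = c₁ ∨ q = c₂ ∨ q = c₃ ∨ q = c₄) ∧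
      ∃ t : ℝ, 0 ≤ t ∧ t ≤ 1 ∧
        t * p.1 + (1 - t) * q.1 ≤ w₁ * c₁.1 + w₂ * c₂.1 + w₃ * c₃.1 + w₄ * c₄.1 ∧
        w₁ * c₁.2 + w₂ * c₂.2 + w₃ * c₃.2 + w₄ * c₄.2 ≤ t * p.2 + (1 - t) * q.2 := by
  rcases eq_or_lt_of_le (by linarith : (0:ℝ) ≤ w₁ + w₂ + w₃) with hW | hW
  · have hw1 : w₁ = 0 := by linarith
    have hw2 : w₂ = 0 := by linarith
    have hw3 : w₃ = 0 := by linarith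
    subst hw1; subst hw2; subst hw3
    have hw4 : w₄ = 1 := by linarith
    subst hw4
    refine ⟨c₄, c₄, Or.inr (Or.inr (Or.inr rfl)), Or.inr (Or.inr (Or.inr rfl)),
      1, by norm_num, by norm_num, by ring_nf; linarith, by ring_nf; linarith⟩
  · obtain ⟨W, hWd⟩ : ∃ x, w₁ + w₂ + w₃ = x := ⟨_, rfl⟩
    rw [hWd] at hW
    obtain ⟨p', q', hp', hq', s, hs0, hs1, hx', hy'⟩ :=
      triangle_dom c₁ c₂ c₃ (w₁ / W) (w₂ / W) (w₃ / W)
        (div_nonneg h₁ hW.le) (div_nonneg h₂ hW.le) (div_nonneg h₃ hW.le)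
        (by field_simp; linarith)
    obtain ⟨p, q, hp, hq, t, ht0, ht1, hx, hy⟩ :=
      triangle_dom p' q' c₄ (W * s) (W * (1 - s)) w₄
        (mul_nonneg hW.le hs0) (mul_nonneg hW.le (by linarith)) h₄ (by ring_nf; linarith)
    have hxW := mul_le_mul_of_nonneg_left hx' hW.le
    have hyW := mul_le_mul_of_nonneg_left hy' hW.le
    have ex : W * (w₁ / W * c₁.1 + w₂ / W * c₂.1 + w₃ / W * c₃.1)
        = w₁ * c₁.1 + w₂ * c₂.1 + w₃ * c₃.1 := by field_simp
    have ey : W * (w₁ / W * c₁.2 + w₂ / W * c₂.2 + w₃ / W * c₃.2)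
        = w₁ * c₁.2 + w₂ * c₂.2 + w₃ * c₃.2 := by field_simp
    rw [ex] at hxW
    rw [ey] at hyW
    have hpm : p = c₁ ∨ p = c₂ ∨ p = c₃ ∨ p = c₄ := by
      rcases hp with rfl | rfl | rfl <;> tauto
    have hqm : q = c₁ ∨ q = c₂ ∨ q = c₃ ∨ q = c₄ := by
      rcases hq with rfl | rfl | rfl <;> tauto
    refine ⟨p, q, hpm, hqm, t, ht0, ht1, by nlinarith [hx, hxW], by nlinarith [hy, hyW]⟩

open Pointwise

set_option maxHeartbeats 1600000 in
/-- Neyman–Pearson optimal noise (Chen et al.): on a nonempty compact metric space of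
noise values, with continuous detection and false-alarm probabilities `F₁, F₀` valued
in `[0,1]`, if some Borel probability noise distribution meets the false-alarm
constraint `∫ F₀ ≤ α`, then an optimal noise distribution is a mixture of at most two
point masses: `μ* = λ δ_{n₁} + (1 − λ) δ_{n₂}` satisfies the constraint and maximizes
the detection probability `∫ F₁` over all feasible noise distributions. -/
theorem np_optimal_noise_two_point {𝒩 : Type*} [MetricSpace 𝒩] [CompactSpace 𝒩]
    [Nonempty 𝒩] [MeasurableSpace 𝒩] [BorelSpace 𝒩]
    (F₁ F₀ : 𝒩 → ℝ) (hF₁ : Continuous F₁) (hF₀ : Continuous F₀)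
    (hF₁01 : ∀ n, F₁ n ∈ Set.Icc (0 : ℝ) 1) (hF₀01 : ∀ n, F₀ n ∈ Set.Icc (0 : ℝ) 1)
    (α : ℝ) (hα : α ∈ Set.Icc (0 : ℝ) 1)
    (hfeas : ∃ μ : Measure 𝒩, IsProbabilityMeasure μ ∧ ∫ n, F₀ n ∂μ ≤ α) :
    ∃ (n₁ n₂ : 𝒩) (l : ℝ), l ∈ Set.Icc (0 : ℝ) 1 ∧
      (∫ n, F₀ n ∂(ENNReal.ofReal l • Measure.dirac n₁ +
          ENNReal.ofReal (1 - l) • Measure.dirac n₂) ≤ α) ∧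
      ∀ ν : Measure 𝒩, IsProbabilityMeasure ν → ∫ n, F₀ n ∂ν ≤ α →
        ∫ n, F₁ n ∂(ENNReal.ofReal l • Measure.dirac n₁ +
            ENNReal.ofReal (1 - l) • Measure.dirac n₂) ≥ ∫ n, F₁ n ∂ν := by
  classical
  -- The set of points of the plane dominated by some two-point mixture value pair.
  set S : Set (ℝ × ℝ) := {z : ℝ × ℝ | ∃ (m₁ m₂ : 𝒩) (t : ℝ), 0 ≤ t ∧ t ≤ 1 ∧
      t * F₀ m₁ + (1 - t) * F₀ m₂ ≤ z.1 ∧ z.2 ≤ t * F₁ m₁ + (1 - t) * F₁ m₂} with hSdef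
  -- S is convex
  have hSconv : Convex ℝ S := by
    intro z hz z' hz' a b ha hb hab
    obtain ⟨m₁, m₂, t, ht0, ht1, hz0, hz1⟩ := hz
    obtain ⟨k₁, k₂, r, hr0, hr1, hz0', hz1'⟩ := hz'
    obtain ⟨p, q, hp, hq, u, hu0, hu1, hx, hy⟩ :=
      quad_dom (F₀ m₁, F₁ m₁) (F₀ m₂, F₁ m₂) (F₀ k₁, F₁ k₁) (F₀ k₂, F₁ k₂)
        (a * t) (a * (1 - t)) (b * r) (b * (1 - r))
        (mul_nonneg ha ht0) (mul_nonneg ha (by linarith))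
        (mul_nonneg hb hr0) (mul_nonneg hb (by linarith))
        (by linear_combination hab)
    dsimp only at hx hy
    obtain ⟨mp, rfl⟩ : ∃ m, p = (F₀ m, F₁ m) := by
      rcases hp with rfl | rfl | rfl | rfl
      exacts [⟨m₁, rfl⟩, ⟨m₂, rfl⟩, ⟨k₁, rfl⟩, ⟨k₂, rfl⟩]
    obtain ⟨mq, rfl⟩ : ∃ m, q = (F₀ m, F₁ m) := by
      rcases hq with rfl | rfl | rfl | rfl
      exacts [⟨m₁, rfl⟩, ⟨m₂, rfl⟩, ⟨k₁, rfl⟩, ⟨k₂, rfl⟩]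
    dsimp only at hx hy
    refine ⟨mp, mq, u, hu0, hu1, ?_, ?_⟩
    · have h1 : (a • z + b • z').1 = a * z.1 + b * z'.1 := by
        simp [smul_eq_mul]
      rw [h1]
      have e1 := mul_le_mul_of_nonneg_left hz0 ha
      have e2 := mul_le_mul_of_nonneg_left hz0' hb
      nlinarith [hx]
    · have h2 : (a • z + b • z').2 = a * z.2 + b * z'.2 := by
        simp [smul_eq_mul]
      rw [h2]
      have e1 := mul_le_mul_of_nonneg_left hz1 ha
      have e2 := mul_le_mul_of_nonneg_left hz1' hb
      nlinarith [hy]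
  -- S is closed
  have hGcont0 : Continuous (fun w : 𝒩 × 𝒩 × ℝ => w.2.2 * F₀ w.1 + (1 - w.2.2) * F₀ w.2.1) := by
    have h22 : Continuous (fun w : 𝒩 × 𝒩 × ℝ => w.2.2) := continuous_snd.comp continuous_snd
    exact (h22.mul (hF₀.comp continuous_fst)).add
      ((continuous_const.sub h22).mul (hF₀.comp (continuous_fst.comp continuous_snd)))
  have hGcont1 : Continuous (fun w : 𝒩 × 𝒩 × ℝ => w.2.2 * F₁ w.1 + (1 - w.2.2) * F₁ w.2.1) := by
    have h22 : Continuous (fun w : 𝒩 × 𝒩 × ℝ => w.2.2) := continuous_snd.comp continuous_snd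
    exact (h22.mul (hF₁.comp continuous_fst)).add
      ((continuous_const.sub h22).mul (hF₁.comp (continuous_fst.comp continuous_snd)))
  have hSclosed : IsClosed S := by
    have hD : IsCompact ((fun w : 𝒩 × 𝒩 × ℝ =>
        (w.2.2 * F₀ w.1 + (1 - w.2.2) * F₀ w.2.1,
         w.2.2 * F₁ w.1 + (1 - w.2.2) * F₁ w.2.1)) ''
        (Set.univ ×ˢ Set.univ ×ˢ Set.Icc (0:ℝ) 1)) :=
      (isCompact_univ.prod (isCompact_univ.prod isCompact_Icc)).image
        (hGcont0.prodMk hGcont1)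
    have hQ : IsClosed {v : ℝ × ℝ | 0 ≤ v.1 ∧ v.2 ≤ 0} :=
      (isClosed_le continuous_const continuous_fst).inter
        (isClosed_le continuous_snd continuous_const)
    have hSeq : S = ((fun w : 𝒩 × 𝒩 × ℝ =>
        (w.2.2 * F₀ w.1 + (1 - w.2.2) * F₀ w.2.1,
         w.2.2 * F₁ w.1 + (1 - w.2.2) * F₁ w.2.1)) ''
        (Set.univ ×ˢ Set.univ ×ˢ Set.Icc (0:ℝ) 1)) + {v : ℝ × ℝ | 0 ≤ v.1 ∧ v.2 ≤ 0} := by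
      ext z
      rw [Set.mem_add]
      constructor
      · rintro ⟨m₁, m₂, t, ht0, ht1, hx, hy⟩
        refine ⟨(t * F₀ m₁ + (1 - t) * F₀ m₂, t * F₁ m₁ + (1 - t) * F₁ m₂),
          ⟨(m₁, m₂, t), ?_, rfl⟩,
          (z.1 - (t * F₀ m₁ + (1 - t) * F₀ m₂), z.2 - (t * F₁ m₁ + (1 - t) * F₁ m₂)),
          ⟨by dsimp only; linarith, by dsimp only; linarith⟩, ?_⟩
        · exact ⟨Set.mem_univ _, Set.mem_univ _, ht0, ht1⟩
        · apply Prod.ext <;> simp only [Prod.fst_add, Prod.snd_add] <;> (try dsimp only) <;> ring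
      · rintro ⟨d, ⟨w, hw, rfl⟩, v, hv, rfl⟩
        refine ⟨w.1, w.2.1, w.2.2, hw.2.2.1, hw.2.2.2, ?_, ?_⟩
        · have := hv.1
          simp only [Prod.fst_add] at this ⊢
          try dsimp only
          linarith
        · have := hv.2
          simp only [Prod.snd_add] at this ⊢
          try dsimp only
          linarith
    rw [hSeq]
    exact hQ.add_left_of_isCompact hD
  -- every one-point pair lies in S
  have hCS : ∀ n : 𝒩, (F₀ n, F₁ n) ∈ S := by
    intro n
    exact ⟨n, n, 1, zero_le_one, le_refl 1, by norm_num, by norm_num⟩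
  -- integrability of continuous functions against finite measures
  have hInt : ∀ (f : 𝒩 → ℝ), Continuous f → ∀ (μ : Measure 𝒩), IsFiniteMeasure μ →
      Integrable f μ := by
    intro f hf μ hμ
    exact hf.integrable_of_hasCompactSupport (HasCompactSupport.of_compactSpace f)
  -- the moment pair of any probability measure lies in S
  have key : ∀ ν : Measure 𝒩, IsProbabilityMeasure ν →
      (∫ n, F₀ n ∂ν, ∫ n, F₁ n ∂ν) ∈ S := by
    intro ν hν
    have hi0 : Integrable F₀ ν := hInt F₀ hF₀ ν inferInstance
    have hi1 : Integrable F₁ ν := hInt F₁ hF₁ ν inferInstance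
    have hipair : Integrable (fun n => (F₀ n, F₁ n)) ν := hi0.prodMk hi1
    have hmem := hSconv.integral_mem hSclosed
      (Filter.Eventually.of_forall fun n => hCS n) hipair
    rwa [integral_pair hi0 hi1] at hmem
  -- the compact feasible set of two-point mixtures
  set T : Set (𝒩 × 𝒩 × ℝ) := {w | w.2.2 ∈ Set.Icc (0:ℝ) 1 ∧
      w.2.2 * F₀ w.1 + (1 - w.2.2) * F₀ w.2.1 ≤ α} with hTdef
  have hTclosed : IsClosed T := by
    refine IsClosed.inter ?_ (isClosed_le hGcont0 continuous_const)
    exact IsClosed.preimage (continuous_snd.comp continuous_snd) isClosed_Icc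
  have hTcomp : IsCompact T := by
    refine (isCompact_univ.prod (isCompact_univ.prod
      (isCompact_Icc (a := (0:ℝ)) (b := 1)))).of_isClosed_subset hTclosed ?_
    intro w hw
    exact ⟨Set.mem_univ _, Set.mem_univ _, hw.1⟩
  have hTne : T.Nonempty := by
    obtain ⟨μ, hμ, hμα⟩ := hfeas
    obtain ⟨n₀, -, hn₀⟩ := isCompact_univ.exists_isMinOn Set.univ_nonempty hF₀.continuousOn
    have hle : F₀ n₀ ≤ ∫ n, F₀ n ∂μ := by
      have h1 : ∫ (_ : 𝒩), F₀ n₀ ∂μ ≤ ∫ n, F₀ n ∂μ :=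
        integral_mono (integrable_const _) (hInt F₀ hF₀ μ inferInstance) fun n => hn₀ (Set.mem_univ n)
      rwa [integral_const, probReal_univ, one_smul] at h1
    exact ⟨(n₀, n₀, 1), ⟨zero_le_one, le_refl 1⟩, by dsimp only; nlinarith⟩
  -- maximize the detection combo over T
  obtain ⟨w₀, hw₀T, hw₀max⟩ := hTcomp.exists_isMaxOn hTne hGcont1.continuousOn
  obtain ⟨hl01, hw₀α⟩ := hw₀T
  refine ⟨w₀.1, w₀.2.1, w₀.2.2, hl01, ?_, ?_⟩
  all_goals {
    have h0l : (0:ℝ) ≤ w₀.2.2 := hl01.1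
    have h1l : w₀.2.2 ≤ 1 := hl01.2
    have hmix : ∀ f : 𝒩 → ℝ, Continuous f →
        ∫ n, f n ∂(ENNReal.ofReal w₀.2.2 • Measure.dirac w₀.1 +
          ENNReal.ofReal (1 - w₀.2.2) • Measure.dirac w₀.2.1)
        = w₀.2.2 * f w₀.1 + (1 - w₀.2.2) * f w₀.2.1 := by
      intro f hf
      have hi1 : Integrable f (Measure.dirac w₀.1) :=
        hInt f hf _ inferInstance
      have hi2 : Integrable f (Measure.dirac w₀.2.1) :=
        hInt f hf _ inferInstance
      rw [integral_add_measure (hi1.smul_measure ENNReal.ofReal_ne_top)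
          (hi2.smul_measure ENNReal.ofReal_ne_top),
        integral_smul_measure, integral_smul_measure, integral_dirac, integral_dirac,
        ENNReal.toReal_ofReal h0l, ENNReal.toReal_ofReal (by linarith), smul_eq_mul,
        smul_eq_mul]
    first
    | -- constraint goal
      (rw [hmix F₀ hF₀]; exact hw₀α)
    | -- optimality goal
      (intro ν hν hνα
       rw [hmix F₁ hF₁]
       obtain ⟨m₁, m₂, t, ht0, ht1, hx, hy⟩ := key ν hν
       dsimp only at hx hy
       have hmT : (m₁, m₂, t) ∈ T := ⟨⟨ht0, ht1⟩, by dsimp only; linarith⟩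
       have hle := (isMaxOn_iff.mp hw₀max) _ hmT
       dsimp only at hle
       linarith)
  }
end

section
/- Let 𝒩 be a nonempty compact metric space (the set of admissible noise values), let I ∈ ℕ, let g : 𝒩 → ℝ^I be continuous (g_i(n) is the value of the i-th risk functional when constant noise n is used), and let α ∈ ℝ^I. If there exists a Borel probability measure μ on 𝒩 with ∫ g_i dμ ≤ α_i for every i = 1, …, I, then there exist m ≤ I + 1 points n₁, …, n_m ∈ 𝒩 and weights λ₁, …, λ_m ≥ 0 with ∑_j λ_j = 1 such that ∑_j λ_j · g_i(n_j) ≤ α_i for every i = 1, …, I; i.e., the risk constraints can be met by a discrete noise distribution of the form ∑_j λ_j δ(n − n_j). -/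
open MeasureTheory

private lemma pad_sum {M : Type*} [AddCommMonoid M] {m N : ℕ} (h : m ≤ N) (f : Fin m → M) :
    ∑ j : Fin N, (if h' : (j : ℕ) < m then f ⟨j, h'⟩ else 0) = ∑ j, f j := by
  rw [Fin.sum_univ_eq_sum_range (fun j => if h' : j < m then f ⟨j, h'⟩ else 0) N,
    ← Finset.sum_subset (Finset.range_subset_range.mpr h)
      (fun j _ hj => dif_neg (by simpa using hj)),
    ← Fin.sum_univ_eq_sum_range (fun j => if h' : j < m then f ⟨j, h'⟩ else 0) m]
  exact Finset.sum_congr rfl fun j _ => by rw [dif_pos j.isLt]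

/-- Noise-enhanced estimation with finitely many risk constraints (Chen et al.):
if some Borel probability noise distribution `μ` on a nonempty compact metric space
satisfies `∫ g_i dμ ≤ α_i` for continuous risk functionals `g_1, …, g_I`, then the
constraints can be met by a discrete noise distribution supported on at most `I + 1`
points: there are `m ≤ I + 1` points `n_j` and weights `λ_j ≥ 0`, `∑ λ_j = 1`, with
`∑_j λ_j g_i(n_j) ≤ α_i` for every `i`. -/
theorem estimation_noise_discrete {𝒩 : Type*} [MetricSpace 𝒩] [CompactSpace 𝒩]
    [Nonempty 𝒩] [MeasurableSpace 𝒩] [BorelSpace 𝒩]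
    (I : ℕ) (g : 𝒩 → Fin I → ℝ) (hg : Continuous g) (α : Fin I → ℝ)
    (hfeas : ∃ μ : Measure 𝒩, IsProbabilityMeasure μ ∧
      ∀ i, ∫ n, g n i ∂μ ≤ α i) :
    ∃ (m : ℕ), m ≤ I + 1 ∧ ∃ (pts : Fin m → 𝒩) (w : Fin m → ℝ),
      (∀ j, 0 ≤ w j) ∧ (∑ j, w j = 1) ∧
      ∀ i, ∑ j, w j * g (pts j) i ≤ α i := by
  obtain ⟨μ, hμ, hint⟩ := hfeas
  have hgi : Integrable g μ :=
    hg.integrable_of_hasCompactSupport (HasCompactSupport.of_compactSpace g)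
  set p := ∫ n, g n ∂μ with hp
  have hpi : ∀ i, p i = ∫ n, g n i ∂μ := by
    intro i
    have := (ContinuousLinearMap.proj (R := ℝ) (φ := fun _ : Fin I => ℝ) i).integral_comp_comm hgi
    simpa using this.symm
  -- the compact set of values achievable by discrete distributions on `I+1` points
  set F : (Fin (I + 1) → ℝ) × (Fin (I + 1) → 𝒩) → (Fin I → ℝ) :=
    fun q => ∑ j, q.1 j • g (q.2 j) with hF
  have hFc : Continuous F := by
    apply continuous_finset_sum
    intro j _
    exact ((continuous_apply j).comp continuous_fst).smul
      (hg.comp ((continuous_apply j).comp continuous_snd))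
  set K : Set (Fin I → ℝ) := F '' ((stdSimplex ℝ (Fin (I + 1))) ×ˢ Set.univ) with hK
  have hKcomp : IsCompact K := ((isCompact_stdSimplex (𝕜 := ℝ) (ι := Fin (I + 1))).prod isCompact_univ).image hFc
  -- Carathéodory: the convex hull of the range of `g` is contained in `K`
  have hsub : convexHull ℝ (Set.range g) ⊆ K := by
    intro x hx
    rw [convexHull_eq_union] at hx
    simp only [Set.mem_iUnion, exists_prop] at hx
    obtain ⟨t, hts, hai, hxt⟩ := hx
    have hcard : t.card ≤ I + 1 := by
      have h1 := hai.card_le_finrank_succ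
      have h2 : Module.finrank ℝ (vectorSpan ℝ (Set.range ((↑) : t → Fin I → ℝ))) ≤ I := by
        have := Submodule.finrank_le (vectorSpan ℝ (Set.range ((↑) : t → Fin I → ℝ)))
        rwa [Module.finrank_fin_fun] at this
      calc t.card = Fintype.card t := (Fintype.card_coe t).symm
        _ ≤ _ + 1 := h1
        _ ≤ I + 1 := by omega
    rw [Finset.convexHull_eq] at hxt
    obtain ⟨w, hw0, hw1, hwx⟩ := hxt
    rw [Finset.centerMass_eq_of_sum_1 _ id hw1] at hwx
    set m := t.card with hm
    set e : t ≃ Fin m := t.equivFin with he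
    have hpre : ∀ y : t, ∃ n : 𝒩, g n = (y : Fin I → ℝ) := fun y => hts y.2
    choose pre hpre' using hpre
    set w' : Fin (I + 1) → ℝ :=
      fun j => if h : (j : ℕ) < m then w (e.symm ⟨j, h⟩) else 0 with hw'
    set pts' : Fin (I + 1) → 𝒩 :=
      fun j => if h : (j : ℕ) < m then pre (e.symm ⟨j, h⟩) else Classical.arbitrary 𝒩 with hpts'
    have hsum1 : ∑ j, w' j = 1 := by
      rw [hw', pad_sum hcard (fun j => w (e.symm j)), Equiv.sum_comp e.symm (fun y => w y)]
      rw [← hw1]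
      exact Finset.sum_coe_sort t w
    refine ⟨(w', pts'), ⟨⟨fun j => ?_, hsum1⟩, Set.mem_univ _⟩, ?_⟩
    · by_cases h : (j : ℕ) < m
      · simp only [hw', dif_pos h]
        exact hw0 _ (e.symm ⟨j, h⟩).2
      · simp [hw', dif_neg h]
    · show ∑ j, w' j • g (pts' j) = x
      have : ∀ j : Fin (I + 1), w' j • g (pts' j) =
          if h : (j : ℕ) < m then w (e.symm ⟨j, h⟩) • ((e.symm ⟨j, h⟩ : t) : Fin I → ℝ) else 0 := by
        intro j
        by_cases h : (j : ℕ) < m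
        · simp only [hw', hpts', dif_pos h, hpre']
        · simp [hw', hpts', dif_neg h]
      rw [Finset.sum_congr rfl fun j _ => this j,
        pad_sum hcard (fun j => w (e.symm j) • ((e.symm j : t) : Fin I → ℝ)),
        Equiv.sum_comp e.symm (fun y : t => w y • (y : Fin I → ℝ))]
      rw [← hwx]
      exact Finset.sum_coe_sort t (fun y => w y • id y)
  -- the barycenter lies in the closed convex hull, hence in `K`
  have hpK : p ∈ K := by
    have hclosed : IsClosed (closure (convexHull ℝ (Set.range g))) := isClosed_closure
    have hpc : p ∈ closure (convexHull ℝ (Set.range g)) := by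
      apply (convex_convexHull ℝ _).closure.integral_mem hclosed
      · exact Filter.Eventually.of_forall fun n =>
          subset_closure (subset_convexHull ℝ _ (Set.mem_range_self n))
      · exact hgi
    exact closure_minimal hsub hKcomp.isClosed hpc
  obtain ⟨⟨w, pts⟩, ⟨hwstd, -⟩, hFp⟩ := hpK
  refine ⟨I + 1, le_refl _, pts, w, hwstd.1, hwstd.2, fun i => ?_⟩
  have : ∑ j, w j * g (pts j) i = p i := by
    rw [← hFp]
    simp [hF, Finset.sum_apply, smul_eq_mul]
  rw [this, hpi i]
  exact hint i
end
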